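/- Given a nested system of fundamental sequences on Γ and an infinite set M ⊆ ℕ with min M > 1, for each ordinal α ≤ Γ the set B^α of α-size subsets of M is a smooth barrier. -/

import Mathlib

open Ordinal

/-- A system of fundamental sequences on `Γ`: to each ordinal `α ≤ Γ` we associate a
non-decreasing sequence `fs α n` with `sup {fs α n + 1 : n} = α` for `α ≠ 0`, and `fs 0 n = 0`. -/
structure FSSystem (Γ : Ordinal) where
  fs : Ordinal → ℕ → Ordinal
  fs_zero : ∀ n, fs 0 n = 0
  mono : ∀ α, α ≤ Γ → Monotone (fs α)
  sup_eq : ∀ α, α ≤ Γ → α ≠ 0 → (⨆ n : ℕ, fs α n + 1) = α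

/-- The system is nested: it is never the case, for `γ < β ≤ Γ` and `n > 1`,
that `γ > β[n] > γ[n]`. -/
def FSSystem.Nested {Γ : Ordinal} (S : FSSystem Γ) : Prop :=
  ∀ γ β (n : ℕ), γ < β → β ≤ Γ → 1 < n → ¬ (S.fs γ n < S.fs β n ∧ S.fs β n < γ)

/-- Iterated evaluation `α[s_0][s_1]…[s_{m-1}]` along a list. -/
def FSSystem.evalL {Γ : Ordinal} (S : FSSystem Γ) (α : Ordinal) (s : List ℕ) : Ordinal :=
  s.foldl S.fs α

/-- The base of a family of finite increasing sequences: all naturals occurring in it. -/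
def sbase (B : Set (List ℕ)) : Set ℕ := {n | ∃ s ∈ B, n ∈ s}

/-- A block: a non-degenerate front. Finite subsets of `ℕ` are identified with their increasing
enumerations. Every infinite subset of the base (given by its increasing enumeration `f`) has an
initial segment in `B`, and `B` is prefix-free. -/
structure IsBlock (B : Set (List ℕ)) : Prop where
  sorted : ∀ s ∈ B, s.Pairwise (· < ·)
  base_infinite : (sbase B).Infinite
  prefix_exists : ∀ f : ℕ → ℕ, StrictMono f → (∀ i, f i ∈ sbase B) →
    ∃ k, (List.range k).map f ∈ B
  prefix_free : ∀ s ∈ B, ∀ t ∈ B, s <+: t → s = t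

/-- Smoothness: for `s, t ∈ B` with `|s| < |t|` there is `i < |s|` with `s(i) < t(i)`. -/
def IsSmooth (B : Set (List ℕ)) : Prop :=
  ∀ s ∈ B, ∀ t ∈ B, s.length < t.length →
    ∃ i, ∃ (hi : i < s.length) (hi' : i < t.length), s.get ⟨i, hi⟩ < t.get ⟨i, hi'⟩

/-- The tree `T(B)`: the closure of `B` under initial segments. -/
def TreeOf (B : Set (List ℕ)) : Set (List ℕ) := {s | ∃ t ∈ B, s <+: t}

/-- The child relation on the tree `T(B)`: `t` is a one-point extension of `s` lying in `T(B)`. -/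
def childRel (B : Set (List ℕ)) (t s : List ℕ) : Prop :=
  t ∈ TreeOf B ∧ ∃ n, t = s ++ [n]

/-- The height of the node `s` in the well-founded tree `T(B)`. -/
noncomputable def nodeHt (B : Set (List ℕ)) (h : WellFounded (childRel B)) (s : List ℕ) :
    Ordinal :=
  (h.apply s).rank

/-- The height `ht(B)` of the front `B`: the height of the tree `T(B)`. -/
noncomputable def htB (B : Set (List ℕ)) (h : WellFounded (childRel B)) : Ordinal :=
  nodeHt B h []

/-- A smooth barrier, allowing the degenerate front `{⟨⟩}`. -/
def IsSmoothBarrier (B : Set (List ℕ)) : Prop :=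
  B = {([] : List ℕ)} ∨ (IsBlock B ∧ IsSmooth B)

/-- The family `B^α` of `α`-size subsets of `M`: the minimal `α`-large increasing sequences
from `M`. -/
def sizeFam {Γ : Ordinal} (S : FSSystem Γ) (α : Ordinal) (M : Set ℕ) : Set (List ℕ) :=
  {s | s.Pairwise (· < ·) ∧ (∀ x ∈ s, x ∈ M) ∧
    S.evalL α s = 0 ∧ (s = [] ∨ S.evalL α s.dropLast ≠ 0)}

/-!
Evaluation along any sequence of indices strictly decreases until it reaches `0`, so every
increasing sequence from `M` has an initial segment of `α`-size, and minimality makes these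
segments prefix-free. For smoothness, nestedness shows that if `t` is increasing with entries
`> 1` and pointwise at most `s`, then `α[t↾i] ≤ α[s↾i]` for all `i ≤ |s|`: once the two
evaluations differ, the one along `t` has already fallen below the `t(i)`-th term of the other.
Hence a member `t` of `B^α` longer than `s` and pointwise at most `s` would have a proper initial
segment of value `0`.
-/

namespace FSSystem

variable {Γ : Ordinal} (S : FSSystem Γ) {α : Ordinal} {M : Set ℕ}

lemma fs_lt {a : Ordinal} (ha : a ≤ Γ) (ha0 : a ≠ 0) (n : ℕ) : S.fs a n < a := by
  have h : S.fs a n + 1 ≤ ⨆ m : ℕ, S.fs a m + 1 := le_ciSup Ordinal.bddAbove_of_small n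
  rw [S.sup_eq a ha ha0] at h
  exact (lt_add_one _).trans_le h

lemma fs_le {a : Ordinal} (ha : a ≤ Γ) (n : ℕ) : S.fs a n ≤ a := by
  rcases eq_or_ne a 0 with rfl | ha0
  · rw [S.fs_zero]
  · exact (S.fs_lt ha ha0 n).le

lemma evalL_cons (a : Ordinal) (n : ℕ) (w : List ℕ) :
    S.evalL a (n :: w) = S.evalL (S.fs a n) w := rfl

lemma evalL_append (a : Ordinal) (u v : List ℕ) :
    S.evalL a (u ++ v) = S.evalL (S.evalL a u) v :=
  List.foldl_append

lemma evalL_concat (a : Ordinal) (u : List ℕ) (n : ℕ) :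
    S.evalL a (u ++ [n]) = S.fs (S.evalL a u) n :=
  S.evalL_append a u [n]

@[simp] lemma evalL_zero (w : List ℕ) : S.evalL 0 w = 0 := by
  induction w with
  | nil => rfl
  | cons n w ih => rwa [evalL_cons, S.fs_zero]

lemma evalL_le {a : Ordinal} (ha : a ≤ Γ) (w : List ℕ) : S.evalL a w ≤ a := by
  induction w generalizing a with
  | nil => exact le_rfl
  | cons n w ih => exact (ih ((S.fs_le ha n).trans ha)).trans (S.fs_le ha n)

lemma evalL_eq_zero_of_prefix {a : Ordinal} {u v : List ℕ} (huv : u <+: v)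
    (hu : S.evalL a u = 0) : S.evalL a v = 0 := by
  obtain ⟨r, rfl⟩ := huv
  rw [evalL_append, hu, evalL_zero]

lemma exists_evalL_map_range_eq_zero {a : Ordinal} (ha : a ≤ Γ) (f : ℕ → ℕ) :
    ∃ k, S.evalL a ((List.range k).map f) = 0 := by
  set g : ℕ → Ordinal := fun k => S.evalL a ((List.range k).map f)
  have hg_succ (k : ℕ) : g (k + 1) = S.fs (g k) (f k) := by
    simp only [g, List.range_succ, List.map_append, List.map_singleton, evalL_concat]
  by_contra! hg0
  obtain ⟨_, ⟨k, rfl⟩, hmin⟩ := Ordinal.lt_wf.has_min (Set.range g) ⟨g 0, 0, rfl⟩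
  refine hmin (g (k + 1)) ⟨k + 1, rfl⟩ ?_
  rw [hg_succ]
  exact S.fs_lt ((S.evalL_le ha _).trans ha) (hg0 k) _

lemma evalL_le_fs_of_nested (hN : S.Nested) {u : ℕ} :
    ∀ {w : List ℕ} {g A : Ordinal}, g ≤ Γ → A ≤ g → (∀ x ∈ w, 1 < x ∧ x ≤ u) →
      S.evalL g w < A → S.evalL g w ≤ S.fs A u
  | [], _, _, _, hAg, _, hlt => absurd hAg (not_le.2 hlt)
  | n :: w, g, A, hg, hAg, hw, hlt => by
    obtain ⟨hn1, hnu⟩ := hw n List.mem_cons_self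
    have hgn : S.fs g n ≤ Γ := (S.fs_le hg n).trans hg
    rw [evalL_cons] at hlt ⊢
    rcases le_or_gt A (S.fs g n) with hA | hA
    · exact evalL_le_fs_of_nested hN hgn hA (fun x hx => hw x (List.mem_cons_of_mem n hx)) hlt
    · refine (S.evalL_le hgn w).trans ?_
      rcases hAg.eq_or_lt with rfl | hAg
      · exact S.mono A hg hnu
      · have hgA : S.fs g n ≤ S.fs A n := not_lt.1 fun h => hN A g n hAg hg hn1 ⟨h, hA⟩
        exact hgA.trans (S.mono A (hAg.le.trans hg) hnu)

lemma evalL_take_le_of_getElem_le (hN : S.Nested) (hα : α ≤ Γ) {s t : List ℕ}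
    (ht : t.Pairwise (· < ·)) (ht1 : ∀ x ∈ t, 1 < x)
    (hts : ∀ i (hs : i < s.length) (ht : i < t.length), t[i] ≤ s[i]) :
    ∀ n ≤ s.length, n ≤ t.length → S.evalL α (t.take n) ≤ S.evalL α (s.take n)
  | 0, _, _ => le_rfl
  | n + 1, hns, hnt => by
    have hle := evalL_take_le_of_getElem_le hN hα ht ht1 hts n (by omega) (by omega)
    rw [List.take_succ_eq_append_getElem hns, List.take_succ_eq_append_getElem hnt,
      evalL_concat, evalL_concat]
    set a := S.evalL α (s.take n)
    set b := S.evalL α (t.take n)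
    have ha : a ≤ Γ := (S.evalL_le hα _).trans hα
    have hst : S.fs a t[n] ≤ S.fs a s[n] := S.mono a ha (hts n hns hnt)
    rcases hle.eq_or_lt with hab | hab
    · rw [hab]
      exact hst
    rcases eq_or_ne b 0 with hb0 | hb0
    · rw [hb0, S.fs_zero]
      exact zero_le
    have htake : ∀ x ∈ t.take n, 1 < x ∧ x ≤ t[n] := by
      intro x hx
      obtain ⟨j, hj, rfl⟩ := List.mem_take_iff_getElem.1 hx
      exact ⟨ht1 _ (List.getElem_mem _),
        (List.pairwise_iff_getElem.1 ht _ _ _ _ (by omega)).le⟩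
    calc S.fs b t[n] ≤ b := S.fs_le ((S.evalL_le hα _).trans hα) _
      _ ≤ S.fs a t[n] := S.evalL_le_fs_of_nested hN hα (S.evalL_le hα _) htake hab
      _ ≤ S.fs a s[n] := hst

lemma sizeFam_zero (M : Set ℕ) : sizeFam S 0 M = {[]} := by
  ext s
  refine ⟨fun ⟨_, _, _, hs⟩ => hs.resolve_right fun h => h (S.evalL_zero _), ?_⟩
  rintro rfl
  exact ⟨List.Pairwise.nil, by simp, rfl, Or.inl rfl⟩

lemma ne_nil_of_mem_sizeFam (hα0 : α ≠ 0) {s : List ℕ} (hs : s ∈ sizeFam S α M) : s ≠ [] := by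
  rintro rfl
  exact hα0 hs.2.2.1

lemma evalL_ne_zero_of_mem_sizeFam {s u : List ℕ} (hs : s ∈ sizeFam S α M) (hus : u <+: s)
    (hne : u ≠ s) : S.evalL α u ≠ 0 := by
  have hlen : u.length < s.length :=
    lt_of_le_of_ne hus.length_le fun h => hne (hus.eq_of_length h)
  have hdrop : u <+: s.dropLast := by
    rw [List.dropLast_eq_take, List.prefix_take_iff]
    exact ⟨hus, by omega⟩
  have hs0 : S.evalL α s.dropLast ≠ 0 := hs.2.2.2.resolve_left fun h => by simp [h] at hlen
  exact fun hu => hs0 (S.evalL_eq_zero_of_prefix hdrop hu)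

lemma exists_map_range_mem_sizeFam (hα : α ≤ Γ) {f : ℕ → ℕ} (hf : StrictMono f)
    (hfM : ∀ i, f i ∈ M) : ∃ k, (List.range k).map f ∈ sizeFam S α M := by
  classical
  have hex := S.exists_evalL_map_range_eq_zero hα f
  refine ⟨Nat.find hex, List.pairwise_lt_range.map _ fun _ _ h => hf h, ?_,
    Nat.find_spec hex, ?_⟩
  · simp only [List.mem_map]
    rintro _ ⟨i, -, rfl⟩
    exact hfM i
  · cases hk : Nat.find hex with
    | zero => exact Or.inl rfl
    | succ j =>
      refine Or.inr ?_
      rw [List.range_succ, List.map_append, List.map_singleton, List.dropLast_concat]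
      exact Nat.find_min hex (by omega)

lemma sbase_sizeFam_subset : sbase (sizeFam S α M) ⊆ M := by
  rintro x ⟨s, hs, hx⟩
  exact hs.2.1 x hx

lemma sbase_sizeFam_infinite (hα : α ≤ Γ) (hα0 : α ≠ 0) (hM : M.Infinite) :
    (sbase (sizeFam S α M)).Infinite := by
  refine Set.infinite_of_forall_exists_gt fun N => ?_
  set p : ℕ → Prop := fun m => m ∈ M ∧ N < m
  have hp : (Set.ofPred p).Infinite :=
    (hM.sdiff (Set.finite_Iic N)).mono fun m hm => ⟨hm.1, not_le.1 hm.2⟩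
  obtain ⟨k, hk⟩ := S.exists_map_range_mem_sizeFam hα (Nat.nth_strictMono hp)
    fun i => (Nat.nth_mem_of_infinite hp i).1
  have hk0 : 0 < k := Nat.pos_of_ne_zero fun h => S.ne_nil_of_mem_sizeFam hα0 hk (by rw [h]; rfl)
  exact ⟨Nat.nth p 0, ⟨_, hk, List.mem_map_of_mem (List.mem_range.2 hk0)⟩,
    (Nat.nth_mem_of_infinite hp 0).2⟩

lemma sizeFam_isBlock (hα : α ≤ Γ) (hα0 : α ≠ 0) (hM : M.Infinite) :
    IsBlock (sizeFam S α M) where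
  sorted _ hs := hs.1
  base_infinite := S.sbase_sizeFam_infinite hα hα0 hM
  prefix_exists _ hf hfB :=
    S.exists_map_range_mem_sizeFam hα hf fun i => S.sbase_sizeFam_subset (hfB i)
  prefix_free s hs t ht hst := by
    by_contra hne
    exact S.evalL_ne_zero_of_mem_sizeFam ht hst hne hs.2.2.1

lemma sizeFam_isSmooth (hN : S.Nested) (hM1 : ∀ m ∈ M, 1 < m) (hα : α ≤ Γ) :
    IsSmooth (sizeFam S α M) := by
  intro s hs t ht hlen
  by_contra! hts
  simp only [List.get_eq_getElem] at hts
  have hle := S.evalL_take_le_of_getElem_le hN hα ht.1 (fun x hx => hM1 x (ht.2.1 x hx)) hts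
    s.length le_rfl hlen.le
  rw [List.take_length, hs.2.2.1, nonpos_iff_eq_zero] at hle
  refine S.evalL_ne_zero_of_mem_sizeFam ht (List.take_prefix _ _) (fun h => ?_) hle
  have hlen' := congrArg List.length h
  rw [List.length_take] at hlen'
  omega

end FSSystem

/-- Given a nested system of fundamental sequences on `Γ` and an infinite `M ⊆ ℕ` with
`min M > 1`, for each `α ≤ Γ` the set `B^α` of `α`-size subsets of `M` is a smooth barrier. -/
theorem sizeFam_isSmoothBarrier {Γ : Ordinal} (S : FSSystem Γ) (hN : S.Nested)
    (M : Set ℕ) (hM : M.Infinite) (hM1 : ∀ m ∈ M, 1 < m)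
    (α : Ordinal) (hα : α ≤ Γ) :
    IsSmoothBarrier (sizeFam S α M) := by
  rcases eq_or_ne α 0 with rfl | hα0
  · exact Or.inl (S.sizeFam_zero M)
  · exact Or.inr ⟨S.sizeFam_isBlock hα hα0 hM, S.sizeFam_isSmooth hN hM1 hα⟩
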